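/- arXiv:1903.11746 — 2 statements merged into one kernel-verified Lean document; each statement's English description precedes it below -/
import Mathlib

section
/- Let X, Y be topological spaces with Y compact, and f an admissible map. Then X +_f Y is compact if and only if f(A) ≠ ∅ for every closed non-compact subset A of X. -/
/-! A closed `A ⊆ X` is cut out of `X +_f Y` by the closed set `A ⊔ f A`, so `X` carries the
subspace topology. If `f A = ∅`, then `A` itself is closed in the sum, hence compact when the sum
is. Conversely, if `U` is open and contains the compact copy of `Y`, its complement is `A ⊔ ∅`
with `A` closed and `f A = ∅`, hence compact; and a space containing a compact set all of whose
open neighbourhoods have compact complement is compact. -/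

open Set Topology

variable {X Y : Type*} [TopologicalSpace X] [TopologicalSpace Y]

/-- A map on subsets is *admissible* if it sends closed sets to closed sets,
the empty set to the empty set, and is finitely additive on closed sets. -/
def Admissible (f : Set X → Set Y) : Prop :=
  (∀ A : Set X, IsClosed A → IsClosed (f A)) ∧ f ∅ = ∅ ∧
    ∀ A B : Set X, IsClosed A → IsClosed B → f (A ∪ B) = f A ∪ f B

/-- The defining condition for a subset of `X ⊕ Y` to be closed in the sum space `X +_f Y`. -/
def SumClosed (f : Set X → Set Y) (A : Set (X ⊕ Y)) : Prop :=
  IsClosed (Sum.inl ⁻¹' A) ∧ IsClosed (Sum.inr ⁻¹' A) ∧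
    f (Sum.inl ⁻¹' A) ⊆ Sum.inr ⁻¹' A

theorem Admissible.mono {f : Set X → Set Y} (hf : Admissible f) {A B : Set X}
    (hA : IsClosed A) (hB : IsClosed B) (hAB : A ⊆ B) : f A ⊆ f B := by
  have h := hf.2.2 A B hA hB
  rw [union_eq_right.mpr hAB] at h
  rw [h]; exact subset_union_left

/-- The sum space `X +_f Y`. -/
def sumTopology (f : Set X → Set Y) (hf : Admissible f) : TopologicalSpace (X ⊕ Y) where
  IsOpen s := SumClosed f sᶜ
  isOpen_univ := by
    refine ⟨?_, ?_, ?_⟩ <;> simp [hf.2.1]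
  isOpen_inter := by
    rintro s t ⟨hs1, hs2, hs3⟩ ⟨ht1, ht2, ht3⟩
    refine ⟨?_, ?_, ?_⟩
    · simpa [compl_inter, preimage_union] using hs1.union ht1
    · simpa [compl_inter, preimage_union] using hs2.union ht2
    · rw [compl_inter, preimage_union, preimage_union, hf.2.2 _ _ hs1 ht1]
      exact union_subset_union hs3 ht3
  isOpen_sUnion := by
    intro S hS
    have hc : (⋃₀ S)ᶜ = ⋂ s ∈ S, sᶜ := by
      rw [compl_sUnion, sInter_image]
    have h1 : IsClosed (Sum.inl ⁻¹' (⋃₀ S)ᶜ) := by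
      rw [hc, preimage_iInter₂]
      exact isClosed_biInter fun s hs => (hS s hs).1
    have h2 : IsClosed (Sum.inr ⁻¹' (⋃₀ S)ᶜ) := by
      rw [hc, preimage_iInter₂]
      exact isClosed_biInter fun s hs => (hS s hs).2.1
    refine ⟨h1, h2, ?_⟩
    rw [hc, preimage_iInter₂, preimage_iInter₂]
    refine subset_iInter₂ fun s hs => ?_
    have h1' : IsClosed (⋂ i ∈ S, Sum.inl ⁻¹' iᶜ) := by
      exact isClosed_biInter fun i hi => (hS i hi).1
    calc f (⋂ i ∈ S, Sum.inl ⁻¹' iᶜ) ⊆ f (Sum.inl ⁻¹' sᶜ) :=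
          hf.mono h1' (hS s hs).1 (iInter₂_subset s hs)
      _ ⊆ Sum.inr ⁻¹' sᶜ := (hS s hs).2.2

theorem isClosed_sumTopology {f : Set X → Set Y} (hf : Admissible f) (A : Set (X ⊕ Y)) :
    IsClosed[sumTopology f hf] A ↔ SumClosed f A := by
  rw [← @isOpen_compl_iff _ _ (sumTopology f hf)]
  show SumClosed f Aᶜᶜ ↔ _
  rw [compl_compl]

theorem compactSpace_of_isCompact_of_forall_isCompact_compl {Z : Type*} [TopologicalSpace Z]
    {K : Set Z} (hK : IsCompact K) (h : ∀ U : Set Z, IsOpen U → K ⊆ U → IsCompact Uᶜ) :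
    CompactSpace Z := by
  refine ⟨isCompact_of_finite_subcover fun {ι} V hV hcov => ?_⟩
  obtain ⟨s, hs⟩ := hK.elim_finite_subcover V hV (subset_univ K |>.trans hcov)
  obtain ⟨t, ht⟩ := (h _ (isOpen_biUnion fun i _ => hV i) hs).elim_finite_subcover V hV
    (subset_univ _ |>.trans hcov)
  classical
  refine ⟨s ∪ t, fun z _ => ?_⟩
  rw [Finset.set_biUnion_union]
  by_cases hz : z ∈ ⋃ i ∈ s, V i
  exacts [Or.inl hz, Or.inr (ht hz)]

section
variable {f : Set X → Set Y}

theorem sumClosed_inl_image_union_inr_image (hf : Admissible f) {A : Set X} (hA : IsClosed A) :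
    SumClosed f (Sum.inl '' A ∪ Sum.inr '' f A) := by
  have hinl : Sum.inl ⁻¹' (Sum.inl '' A ∪ Sum.inr '' f A) = A := by
    simp [Sum.inl_injective.preimage_image]
  have hinr : Sum.inr ⁻¹' (Sum.inl '' A ∪ Sum.inr '' f A) = f A := by
    simp [Sum.inr_injective.preimage_image]
  unfold SumClosed
  rw [hinl, hinr]
  exact ⟨hA, hf.1 A hA, subset_rfl⟩

theorem isClosed_inl_image_sumTopology (hf : Admissible f) {A : Set X} (hA : IsClosed A)
    (hfA : f A = ∅) :
    IsClosed[sumTopology f hf] (Sum.inl '' A) := by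
  simpa [isClosed_sumTopology, hfA] using sumClosed_inl_image_union_inr_image hf hA

theorem continuous_inl_sumTopology (hf : Admissible f) :
    Continuous[_, sumTopology f hf] Sum.inl :=
  letI := sumTopology f hf
  continuous_iff_isClosed.mpr fun _ hC => ((isClosed_sumTopology hf _).mp hC).1

theorem continuous_inr_sumTopology (hf : Admissible f) :
    Continuous[_, sumTopology f hf] Sum.inr :=
  letI := sumTopology f hf
  continuous_iff_isClosed.mpr fun _ hC => ((isClosed_sumTopology hf _).mp hC).2.1

theorem isInducing_inl_sumTopology (hf : Admissible f) :
    @IsInducing _ _ _ (sumTopology f hf) Sum.inl := by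
  let := sumTopology f hf
  refine ⟨TopologicalSpace.ext_isClosed fun A => ⟨fun hA => ?_, ?_⟩⟩
  · refine isClosed_induced_iff.mpr ⟨_, (isClosed_sumTopology hf _).mpr
      (sumClosed_inl_image_union_inr_image hf hA), ?_⟩
    simp [Sum.inl_injective.preimage_image]
  · intro hA
    obtain ⟨C, hC, rfl⟩ := isClosed_induced_iff.mp hA
    exact hC.preimage (continuous_inl_sumTopology hf)

theorem isCompact_compl_sumTopology (hf : Admissible f)
    (h : ∀ A : Set X, IsClosed A → ¬IsCompact A → f A ≠ ∅) {U : Set (X ⊕ Y)}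
    (hU : IsOpen[sumTopology f hf] U) (hYU : range Sum.inr ⊆ U) :
    @IsCompact _ (sumTopology f hf) Uᶜ := by
  let := sumTopology f hf
  have hC : SumClosed f Uᶜ := (isClosed_sumTopology hf _).mp hU.isClosed_compl
  have hfA : f (Sum.inl ⁻¹' Uᶜ) = ∅ :=
    subset_empty_iff.mp <| hC.2.2.trans fun y hy => hy (hYU (mem_range_self y))
  have hA : IsCompact (Sum.inl ⁻¹' Uᶜ) := by
    by_contra hnc
    exact h _ hC.1 hnc hfA
  have hUc : Sum.inl '' (Sum.inl ⁻¹' Uᶜ) = Uᶜ :=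
    image_preimage_eq_of_subset <| compl_range_inr ▸ compl_subset_compl.mpr hYU
  exact hUc ▸ hA.image (continuous_inl_sumTopology hf)

end

/-- compactness criterion for `X +_f Y` when `Y` is compact. -/
theorem statement8 [CompactSpace Y] (f : Set X → Set Y) (hf : Admissible f) :
    @CompactSpace _ (sumTopology f hf) ↔
      ∀ A : Set X, IsClosed A → ¬IsCompact A → f A ≠ ∅ := by
  let := sumTopology f hf
  constructor
  · intro _ A hA hnA hfA
    exact hnA <| (isInducing_inl_sumTopology hf).isCompact_iff.mpr
      (isClosed_inl_image_sumTopology hf hA hfA).isCompact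
  · intro h
    exact compactSpace_of_isCompact_of_forall_isCompact_compl
      (isCompact_range (continuous_inr_sumTopology hf))
      fun U hU hYU => isCompact_compl_sumTopology hf h hU hYU
end

section
/- If X +_f W, Y, and Z are Hausdorff and ϖ : Z → W is injective, then the pullback space Y +_{f*} Z is Hausdorff. -/
/-!
Proof idea: `π + ϖ` is continuous into the Hausdorff space `X +_f W`, so points with distinct
images are separated by preimages of disjoint open sets. Points with equal images lie either
both in `Z`, where injectivity of `ϖ` makes them equal, or both in `Y`, which is an open
subspace of `Y +_{f*} Z` and Hausdorff.
-/

open Set Topology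

variable {X Y : Type*} [TopologicalSpace X] [TopologicalSpace Y]

theorem isOpen_sumTopology_image_inl (g : Set X → Set Y) (hg : Admissible g) {U : Set X}
    (hU : IsOpen U) : IsOpen[sumTopology g hg] (Sum.inl '' U) := by
  show SumClosed g (Sum.inl '' U)ᶜ
  have hinl : Sum.inl ⁻¹' (Sum.inl '' U : Set (X ⊕ Y))ᶜ = Uᶜ := by ext; simp
  have hinr : Sum.inr ⁻¹' (Sum.inl '' U : Set (X ⊕ Y))ᶜ = univ := by ext; simp
  rw [SumClosed, hinl, hinr]
  exact ⟨hU.isClosed_compl, isClosed_univ, subset_univ _⟩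

theorem t2Space_sumTopology_of_continuous [T2Space X] {β : Type*}
    [TopologicalSpace β] [T2Space β] (g : Set X → Set Y) (hg : Admissible g)
    (p : X ⊕ Y → β) (hp : Continuous[sumTopology g hg, _] p)
    (hp_inr : Function.Injective (p ∘ Sum.inr)) (hp_ne : ∀ x y, p (Sum.inl x) ≠ p (Sum.inr y)) :
    @T2Space _ (sumTopology g hg) := by
  let := sumTopology g hg
  constructor
  intro a b hab
  by_cases hpab : p a = p b
  · rcases a with x₁ | y₁ <;> rcases b with x₂ | y₂
    · obtain ⟨U, V, hU, hV, hxU, hxV, hUV⟩ := t2_separation fun h => hab (congrArg Sum.inl h)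
      exact ⟨_, _, isOpen_sumTopology_image_inl g hg hU, isOpen_sumTopology_image_inl g hg hV,
        mem_image_of_mem _ hxU, mem_image_of_mem _ hxV,
        (disjoint_image_iff Sum.inl_injective).mpr hUV⟩
    · exact absurd hpab (hp_ne x₁ y₂)
    · exact absurd hpab.symm (hp_ne x₂ y₁)
    · exact absurd (congrArg Sum.inr (hp_inr hpab)) hab
  · obtain ⟨U, V, hU, hV, haU, hbV, hUV⟩ := t2_separation hpab
    exact ⟨_, _, hU.preimage hp, hV.preimage hp, haU, hbV, hUV.preimage p⟩

theorem continuous_sumMap_sumTopology {Z W : Type*} [TopologicalSpace Z] [TopologicalSpace W]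
    {f : Set X → Set W} (hf : Admissible f) {g : Set Y → Set Z} (hg : Admissible g)
    {π : Y → X} {ϖ : Z → W} (hπ : Continuous π) (hϖ : Continuous ϖ)
    (hfg : ∀ A, IsClosed A → g (π ⁻¹' A) ⊆ ϖ ⁻¹' f A) :
    Continuous[sumTopology g hg, sumTopology f hf] (Sum.map π ϖ) := by
  rw [continuous_def]
  intro s ⟨hinl, hinr, hsub⟩
  show SumClosed g (Sum.map π ϖ ⁻¹' s)ᶜ
  have e_inl : Sum.inl ⁻¹' (Sum.map π ϖ ⁻¹' s)ᶜ = π ⁻¹' (Sum.inl ⁻¹' sᶜ) := by ext; simp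
  have e_inr : Sum.inr ⁻¹' (Sum.map π ϖ ⁻¹' s)ᶜ = ϖ ⁻¹' (Sum.inr ⁻¹' sᶜ) := by ext; simp
  rw [SumClosed, e_inl, e_inr]
  exact ⟨hinl.preimage hπ, hinr.preimage hϖ, (hfg _ hinl).trans (preimage_mono hsub)⟩

theorem Admissible.closure_image_preimage_subset {f : Set X → Set Y} (hf : Admissible f)
    {Z : Type*} (π : Z → X) {A : Set X} (hA : IsClosed A) :
    f (closure (π '' (π ⁻¹' A))) ⊆ f A :=
  hf.mono isClosed_closure hA <| closure_minimal (image_preimage_subset π A) hA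

theorem statement13_general {Z W : Type*} [TopologicalSpace Z] [TopologicalSpace W]
    [T2Space Y]
    (f : Set X → Set W) (hf : Admissible f)
    (h2 : @T2Space _ (sumTopology f hf))
    (π : Y → X) (ϖ : Z → W) (hπ : Continuous π) (hϖ : Continuous ϖ)
    (hinj : Function.Injective ϖ)
    (hstar : Admissible (fun A : Set Y => ϖ ⁻¹' (f (closure (π '' A))))) :
    @T2Space _ (sumTopology (fun A : Set Y => ϖ ⁻¹' (f (closure (π '' A)))) hstar) := by
  let := sumTopology f hf
  exact t2Space_sumTopology_of_continuous _ hstar (Sum.map π ϖ)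
    (continuous_sumMap_sumTopology hf hstar hπ hϖ fun _ hA =>
      preimage_mono (hf.closure_image_preimage_subset π hA))
    (Sum.inr_injective.comp hinj) fun _ _ => Sum.inl_ne_inr

/-- if `X +_f W`, `Y`, `Z` are Hausdorff and `ϖ` is injective, then
`Y +_{f*} Z` is Hausdorff. -/
theorem statement13 {Z W : Type*} [TopologicalSpace Z] [TopologicalSpace W]
    [T2Space Y] [T2Space Z]
    (f : Set X → Set W) (hf : Admissible f)
    (h2 : @T2Space _ (sumTopology f hf))
    (π : Y → X) (ϖ : Z → W) (hπ : Continuous π) (hϖ : Continuous ϖ)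
    (hinj : Function.Injective ϖ)
    (hstar : Admissible (fun A : Set Y => ϖ ⁻¹' (f (closure (π '' A))))) :
    @T2Space _ (sumTopology (fun A : Set Y => ϖ ⁻¹' (f (closure (π '' A)))) hstar) :=
  statement13_general f hf h2 π ϖ hπ hϖ hinj hstar
end
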